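/- Let s ∈ S(G,O) with α(s) in the center of G_O, and let s1 ∈ S(G,O) with G_{s1} = G_O. Then s·s1 = ρ(g)(s)·s1 for every g ∈ G_O. -/

import Mathlib

/-- The defining relations of the factorization semigroup `S(G,O)`:
`x_{g₁} ⬝ x_{g₂} = x_{g₂} ⬝ x_{g₂⁻¹ g₁ g₂}`. -/
inductive FactRel (G : Type) [Group G] (O : Set G) :
    FreeSemigroup {g : G // g ∈ O} → FreeSemigroup {g : G // g ∈ O} → Prop
  | rel (g₁ g₂ : {g : G // g ∈ O}) (h : (g₂ : G)⁻¹ * g₁ * g₂ ∈ O) :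
      FactRel G O (FreeSemigroup.of g₁ * FreeSemigroup.of g₂)
        (FreeSemigroup.of g₂ * FreeSemigroup.of ⟨(g₂ : G)⁻¹ * g₁ * g₂, h⟩)

/-- The factorization semigroup `S(G,O)`. -/
def FactS (G : Type) [Group G] (O : Set G) :=
  (conGen (FactRel G O)).Quotient

instance (G : Type) [Group G] (O : Set G) : Semigroup (FactS G O) :=
  Con.semigroup _

/-- The generator `x_g` of `S(G,O)`. -/
def xg {G : Type} [Group G] {O : Set G} (g : {g : G // g ∈ O}) : FactS G O :=
  (conGen (FactRel G O)).toQuotient (FreeSemigroup.of g)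

/-- The element of `S(G,O)` given by the word `x_{g} ⬝ x_{g₁} ⬝ ... ⬝ x_{gₖ}`. -/
def wordOf {G : Type} [Group G] {O : Set G} (g : {g : G // g ∈ O})
    (gs : List {g : G // g ∈ O}) : FactS G O :=
  gs.foldl (fun s h => s * xg h) (xg g)

/-!
If `α s` commutes with `O`, then `s` is central in `S(G,O)`: moving `s` past any `t` conjugates `t`
by `α s`, which fixes every generator. For a generator `x_h` the defining relation reads
`x_h ⬝ u = ρ(h)(u) ⬝ x_h`, so for central `u` we get `ρ(h)(u) ⬝ x_h = u ⬝ x_h`, and by centrality this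
persists when `x_h` is only one letter of `s₁`. The elements `g` with `ρ(g)(u) ⬝ s₁ = u ⬝ s₁` for all
central `u` form a subgroup, which therefore contains `G_{s₁} = G_O`.
-/

open Subgroup

section CenterStabilizer

variable {G M : Type*} [Group G] [Semigroup M] (ρ : G →* MulAut M)

def centerStabilizer (t : M) : Subgroup G where
  carrier := {g | ∀ u ∈ Set.center M, ρ g u * t = u * t}
  one_mem' _ _ := by rw [map_one, MulAut.one_apply]
  mul_mem' {x y} hx hy u hu := by
    rw [map_mul, MulAut.mul_apply, hx _ (MulEquivClass.apply_mem_center _ hu), hy u hu]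
  inv_mem' {x} hx u hu := by
    have h := hx _ (MulEquivClass.apply_mem_center (ρ x⁻¹) hu)
    rwa [← MulAut.mul_apply, ← map_mul, mul_inv_cancel, map_one, MulAut.one_apply, eq_comm] at h

theorem centerStabilizer_le_mul_right (w t : M) :
    centerStabilizer ρ w ≤ centerStabilizer ρ (w * t) := fun g hg u hu => by
  rw [← mul_assoc, hg u hu, mul_assoc]

theorem centerStabilizer_le_mul_left (w t : M) :
    centerStabilizer ρ t ≤ centerStabilizer ρ (w * t) := fun g hg u hu => by
  rw [← mul_assoc, ← Semigroup.mem_center_iff.1 (MulEquivClass.apply_mem_center (ρ g) hu) w,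
    mul_assoc, hg u hu, ← mul_assoc, Semigroup.mem_center_iff.1 hu w, mul_assoc]

end CenterStabilizer

section FactS

variable {G : Type} [Group G] {O : Set G}

theorem FactS.induction_on {p : FactS G O → Prop} (x : FactS G O) (hxg : ∀ g, p (xg g))
    (hmul : ∀ a b, p a → p b → p (a * b)) : p x := by
  induction x using Con.induction_on with
  | H w =>
    induction w using FreeSemigroup.recOnMul with
    | ih1 g => exact hxg g
    | ih2 a b _ hb => exact hmul (xg a) _ (hxg a) hb

theorem xg_mul_xg (g₁ g₂ : {g : G // g ∈ O}) (h : (g₂ : G)⁻¹ * g₁ * g₂ ∈ O) :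
    xg g₁ * xg g₂ = xg g₂ * xg ⟨(g₂ : G)⁻¹ * g₁ * g₂, h⟩ :=
  (Con.eq _).2 (ConGen.Rel.of _ _ (FactRel.rel g₁ g₂ h))

theorem wordOf_concat (g : {g : G // g ∈ O}) (gs : List {g : G // g ∈ O})
    (k : {g : G // g ∈ O}) :
    wordOf g (gs ++ [k]) = wordOf g gs * xg k := by
  simp [wordOf]

theorem wordOf_mul_wordOf (g : {g : G // g ∈ O}) (gs : List {g : G // g ∈ O})
    (g' : {g : G // g ∈ O}) (gs' : List {g : G // g ∈ O}) :
    wordOf g gs * wordOf g' gs' = wordOf g (gs ++ g' :: gs') := by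
  induction gs' using List.reverseRecOn with
  | nil => exact (wordOf_concat g gs g').symm
  | append_singleton gs' k ih =>
    rw [wordOf_concat, ← mul_assoc, ih, ← wordOf_concat, List.append_assoc, List.cons_append]

theorem exists_eq_wordOf (s : FactS G O) : ∃ g gs, s = wordOf g gs := by
  induction s using FactS.induction_on with
  | hxg g => exact ⟨g, [], rfl⟩
  | hmul a b ha hb =>
    obtain ⟨g, gs, rfl⟩ := ha
    obtain ⟨g', gs', rfl⟩ := hb
    exact ⟨g, gs ++ g' :: gs', wordOf_mul_wordOf g gs g' gs'⟩

def IsConjAction (hO : ∀ g ∈ O, ∀ h : G, h⁻¹ * g * h ∈ O) (ρ : G →* MulAut (FactS G O)) :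
    Prop :=
  ∀ (h : G) (g : G) (hg : g ∈ O),
    ρ h (xg ⟨g, hg⟩) = xg ⟨h * g * h⁻¹, by simpa using hO g hg h⁻¹⟩

variable {hO : ∀ g ∈ O, ∀ h : G, h⁻¹ * g * h ∈ O} {ρ : G →* MulAut (FactS G O)}
  {α : FactS G O →ₙ* G}

theorem xg_mul (hρ : IsConjAction hO ρ) (h : {g : G // g ∈ O}) (u : FactS G O) :
    xg h * u = ρ h u * xg h := by
  induction u using FactS.induction_on with
  | hxg k =>
    obtain ⟨k, hk⟩ := k
    rw [hρ, xg_mul_xg _ h (by simpa [mul_assoc] using hk)]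
    congr 2
    group
  | hmul a b ha hb => rw [← mul_assoc, ha, mul_assoc, hb, ← mul_assoc, ← map_mul]

theorem mul_eq_map_mul (hα : ∀ g : {g : G // g ∈ O}, α (xg g) = (g : G))
    (hρ : IsConjAction hO ρ) (t u : FactS G O) : t * u = ρ (α t) u * t := by
  induction t using FactS.induction_on generalizing u with
  | hxg h => rw [hα h]; exact xg_mul hρ h u
  | hmul a b ha hb =>
    rw [mul_assoc, hb, ← mul_assoc, ha, ← mul_assoc, map_mul, map_mul, MulAut.mul_apply]

theorem map_eq_self_of_mem_centralizer (hρ : IsConjAction hO ρ) {c : G}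
    (hc : c ∈ centralizer O) (x : FactS G O) : ρ c x = x := by
  induction x using FactS.induction_on with
  | hxg k =>
    obtain ⟨k, hk⟩ := k
    rw [hρ]
    congr 2
    rw [← hc k hk, mul_inv_cancel_right]
  | hmul a b ha hb => rw [map_mul, ha, hb]

theorem mem_center_of_map_mem_centralizer (hα : ∀ g : {g : G // g ∈ O}, α (xg g) = (g : G))
    (hρ : IsConjAction hO ρ) {u : FactS G O} (hu : α u ∈ centralizer O) :
    u ∈ Set.center (FactS G O) :=
  Semigroup.mem_center_iff.2 fun t => by
    rw [mul_eq_map_mul hα hρ u t, map_eq_self_of_mem_centralizer hρ hu]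

theorem mem_centerStabilizer_xg (hρ : IsConjAction hO ρ) (h : {g : G // g ∈ O}) :
    (h : G) ∈ centerStabilizer ρ (xg h) := fun u hu => by
  rw [← xg_mul hρ, Semigroup.mem_center_iff.1 hu]

theorem closure_letters_le_centerStabilizer (hρ : IsConjAction hO ρ) (g : {g : G // g ∈ O})
    (gs : List {g : G // g ∈ O}) :
    closure {a : G | a ∈ (g :: gs).map Subtype.val} ≤ centerStabilizer ρ (wordOf g gs) := by
  rw [closure_le]
  induction gs using List.reverseRecOn with
  | nil =>
    intro a ha
    rw [Set.mem_ofPred_eq, List.map_singleton, List.mem_singleton] at ha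
    exact ha ▸ mem_centerStabilizer_xg hρ g
  | append_singleton gs k ih =>
    intro a ha
    rw [wordOf_concat]
    rw [Set.mem_ofPred_eq, ← List.cons_append, List.map_append, List.mem_append] at ha
    rcases ha with ha | ha
    · exact centerStabilizer_le_mul_right ρ _ _ (ih ha)
    · rw [List.map_singleton, List.mem_singleton] at ha
      exact ha ▸ centerStabilizer_le_mul_left ρ _ _ (mem_centerStabilizer_xg hρ k)

end FactS

theorem stmt10 (G : Type) [Group G] (O : Set G)
    (hO : ∀ g ∈ O, ∀ h : G, h⁻¹ * g * h ∈ O)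
    (α : FactS G O →ₙ* G) (hα : ∀ g : {g : G // g ∈ O}, α (xg g) = (g : G))
    (ρ : G →* MulAut (FactS G O))
    (hρ : ∀ (h : G) (g : G) (hg : g ∈ O),
      ρ h (xg ⟨g, hg⟩) = xg ⟨h * g * h⁻¹, by simpa using hO g hg h⁻¹⟩)
    (Gs : FactS G O → Subgroup G)
    (hGs : ∀ (g : {g : G // g ∈ O}) (gs : List {g : G // g ∈ O}),
      Gs (wordOf g gs) = Subgroup.closure {a : G | a ∈ (g :: gs).map Subtype.val}) :
    ∀ s s₁ : FactS G O,
      α s ∈ Subgroup.closure O →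
      α s ∈ Subgroup.centralizer ((Subgroup.closure O : Subgroup G) : Set G) →
      Gs s₁ = Subgroup.closure O →
      ∀ g ∈ Subgroup.closure O, s * s₁ = ρ g s * s₁ := by
  intro s s₁ _ hs hs₁ g hg
  have hconj : IsConjAction hO ρ := hρ
  obtain ⟨k, ks, rfl⟩ := exists_eq_wordOf s₁
  have hletters : g ∈ closure {a : G | a ∈ (k :: ks).map Subtype.val} := hGs k ks ▸ hs₁ ▸ hg
  have hcentral : s ∈ Set.center (FactS G O) :=
    mem_center_of_map_mem_centralizer hα hconj (centralizer_closure O ▸ hs)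
  exact (closure_letters_le_centerStabilizer hconj k ks hletters s hcentral).symm
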